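/- For the trigonal bipyramid vertices p₁,…,p₅ and every unit vector u = (u₁,u₂,u₃) ∈ ℝ³, the vector γ(u) = T⁻¹Xᵀb(u), where b(u)ᵢ = uᵀBᵢu, equals ((u₂² − u₁²)/2, u₁u₂, 0). -/

import Mathlib

/-!
Expanding `Bᵢ` gives `uᵀBᵢu = |pᵢ|²|u|² − (pᵢ·u)² + c(u)` with `c(u)` independent of `i`.
Since the vertices are centred, `Xᵀb(u) = Σᵢ bᵢ pᵢ` loses the constant `c(u)`. For the
bipyramid the two apices cancel each other (`p₂ = −p₁`), and on the equatorial triangle the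
`|u|²` term cancels as well, leaving the cubic moment `−Σ (pᵢ·u)² pᵢ` of the triangle,
`(3/4)(u₂² − u₁², 2u₁u₂, 0)`. Dividing by `XᵀX = diag(3/2, 3/2, 2h²)` gives `γ(u)`.
-/

open Matrix

/-- The five vertices of the trigonal bipyramid `BP`, as rows of the `5 × 3` matrix `X`. -/
noncomputable def bpv (h : ℝ) : Fin 5 → Fin 3 → ℝ :=
  ![![0, 0, h], ![0, 0, -h], ![1, 0, 0], ![-(1/2), Real.sqrt 3 / 2, 0],
    ![-(1/2), -(Real.sqrt 3 / 2), 0]]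

/-- `Bᵢ = tr(Vᵢ − V)·I₃ − (Vᵢ − V)` where `Vᵢ = xᵢxᵢᵀ` and `V = (Σⱼ xⱼxⱼᵀ)/5`. -/
noncomputable def Bmat (x : Fin 5 → Fin 3 → ℝ) (i : Fin 5) : Matrix (Fin 3) (Fin 3) ℝ :=
  (vecMulVec (x i) (x i) - (5 : ℝ)⁻¹ • ∑ j, vecMulVec (x j) (x j)).trace •
      (1 : Matrix (Fin 3) (Fin 3) ℝ)
    - (vecMulVec (x i) (x i) - (5 : ℝ)⁻¹ • ∑ j, vecMulVec (x j) (x j))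

/-- `b(u) ∈ ℝ⁵` with `b(u)ᵢ = uᵀBᵢu`. -/
noncomputable def bvec (x : Fin 5 → Fin 3 → ℝ) (u : Fin 3 → ℝ) : Fin 5 → ℝ :=
  fun i => u ⬝ᵥ (Bmat x i *ᵥ u)

/-- `γ(u) = T⁻¹ Xᵀ b(u)` where `T = XᵀX`. -/
noncomputable def gammaVec (x : Fin 5 → Fin 3 → ℝ) (u : Fin 3 → ℝ) : Fin 3 → ℝ :=
  ((Matrix.of x)ᵀ * Matrix.of x)⁻¹ *ᵥ ((Matrix.of x)ᵀ *ᵥ bvec x u)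

lemma bvec_apply (x : Fin 5 → Fin 3 → ℝ) (u : Fin 3 → ℝ) (i : Fin 5) :
    bvec x u i = (x i ⬝ᵥ x i) * (u ⬝ᵥ u) - (x i ⬝ᵥ u) ^ 2
      + 5⁻¹ * (u ⬝ᵥ ((∑ j, vecMulVec (x j) (x j)) *ᵥ u)
        - (∑ j, vecMulVec (x j) (x j)).trace * (u ⬝ᵥ u)) := by
  simp only [bvec, Bmat, sub_mulVec, smul_mulVec, one_mulVec, dotProduct_sub, dotProduct_smul,
    trace_sub, trace_smul, trace_vecMulVec, vecMulVec_mulVec, op_smul_eq_smul, smul_eq_mul]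
  rw [dotProduct_comm u (x i)]
  ring

lemma transpose_mulVec_bvec_of_sum_eq_zero (x : Fin 5 → Fin 3 → ℝ) (hx : ∑ i, x i = 0)
    (u : Fin 3 → ℝ) :
    (of x)ᵀ *ᵥ bvec x u = ∑ i, ((x i ⬝ᵥ x i) * (u ⬝ᵥ u) - (x i ⬝ᵥ u) ^ 2) • x i := by
  have hrow : ∀ i, of x i = x i := fun _ => rfl
  simp only [mulVec_transpose, vecMul_eq_sum, hrow, bvec_apply, add_smul,
    Finset.sum_add_distrib, ← Finset.smul_sum, hx, smul_zero, add_zero]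

lemma bpv_sum_eq_zero (h : ℝ) : ∑ i, bpv h i = 0 := by
  ext k
  fin_cases k <;> simp [bpv, Fin.sum_univ_five]
  ring

lemma bpv_gram (h : ℝ) :
    (of (bpv h))ᵀ * of (bpv h) = diagonal ![3 / 2, 3 / 2, 2 * h ^ 2] := by
  have hs3 : Real.sqrt 3 / 2 * (Real.sqrt 3 / 2) = 3 / 4 := by
    rw [div_mul_div_comm, Real.mul_self_sqrt (by norm_num)]; norm_num
  ext i j
  fin_cases i <;> fin_cases j <;>
    simp [bpv, mul_apply, Fin.sum_univ_five, diagonal, hs3] <;> ring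

lemma bpv_moment (h : ℝ) (u : Fin 3 → ℝ) :
    ∑ i, ((bpv h i ⬝ᵥ bpv h i) * (u ⬝ᵥ u) - (bpv h i ⬝ᵥ u) ^ 2) • bpv h i
      = ![3 / 4 * (u 1 ^ 2 - u 0 ^ 2), 3 / 2 * (u 0 * u 1), 0] := by
  have hs3 : Real.sqrt 3 ^ 2 = 3 := Real.sq_sqrt (by norm_num)
  ext k
  fin_cases k <;> simp [bpv, Fin.sum_univ_five, dotProduct, Fin.sum_univ_three]
  · linear_combination (-(u 0 ^ 2 + u 2 ^ 2) / 4) * hs3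
  · linear_combination (u 0 * u 1 / 2) * hs3

theorem bipyramid_gamma_general (h : ℝ) (h0 : 0 < h) (u : Fin 3 → ℝ) :
    gammaVec (bpv h) u = ![(u 1 ^ 2 - u 0 ^ 2) / 2, u 0 * u 1, 0] := by
  have hdet : IsUnit ((of (bpv h))ᵀ * of (bpv h)).det := by
    rw [bpv_gram, det_diagonal, isUnit_iff_ne_zero]
    simp [Fin.prod_univ_three]
    positivity
  let _ := invertibleOfIsUnitDet _ hdet
  refine inv_mulVec_eq_vec ?_
  rw [transpose_mulVec_bvec_of_sum_eq_zero _ (bpv_sum_eq_zero h), bpv_moment, bpv_gram]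
  ext i
  fin_cases i <;> simp [mulVec_diagonal]
  ring

/-- For the trigonal bipyramid vertices and any unit vector `u`,
`γ(u) = ((u₂² − u₁²)/2, u₁u₂, 0)`. -/
theorem bipyramid_gamma (h : ℝ) (h0 : 0 < h) (u : Fin 3 → ℝ) (hu : u ⬝ᵥ u = 1) :
    gammaVec (bpv h) u = ![(u 1 ^ 2 - u 0 ^ 2) / 2, u 0 * u 1, 0] :=
  bipyramid_gamma_general h h0 u
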